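/- If A and B are admissible linear chains with e(A) + e(B) = 1, then d(A) = d(B). -/

import Mathlib

/-- The tridiagonal matrix of a linear chain: diagonal entries from the list,
entries `-1` on the first sub- and super-diagonals, `0` elsewhere. -/
def chainMatrix (l : List ℤ) : Matrix (Fin l.length) (Fin l.length) ℤ :=
  fun i j =>
    if i = j then l.get i
    else if (i : ℕ) + 1 = (j : ℕ) ∨ (j : ℕ) + 1 = (i : ℕ) then -1 else 0

/-- The discriminant of a linear chain. -/
def disc (l : List ℤ) : ℤ := (chainMatrix l).det

/-- A linear chain is admissible if it is nonempty and all entries are ≥ 2. -/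
def Admissible (l : List ℤ) : Prop := l ≠ [] ∧ ∀ a ∈ l, 2 ≤ a

/-- The inductance of a chain. -/
def ind (l : List ℤ) : ℚ := (disc l.tail : ℚ) / (disc l : ℚ)

/-!
Expanding the determinant gives the continuant recurrence `d(a :: b :: l) = a d(b :: l) - d(l)`.
As for consecutive convergents of a continued fraction, it shows that `d(A)` and `d(Ā)` are
coprime, and, when all entries are `≥ 2`, that `d` is positive. Clearing denominators in
`e(A) + e(B) = 1` gives `d(Ā) d(B) + d(A) d(B̄) = d(A) d(B)`, so `d(A) ∣ d(Ā) d(B)`, hence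
`d(A) ∣ d(B)` by coprimality; symmetrically `d(B) ∣ d(A)`, and positivity gives `d(A) = d(B)`.
-/

namespace Matrix

variable {R : Type*} [CommRing R] {n : ℕ}

def negOneTridiag (d : Fin n → R) : Matrix (Fin n) (Fin n) R :=
  fun i j =>
    if i = j then d i
    else if (i : ℕ) + 1 = (j : ℕ) ∨ (j : ℕ) + 1 = (i : ℕ) then -1 else 0

theorem negOneTridiag_succ_succ (d : Fin (n + 1) → R) (i j : Fin n) :
    negOneTridiag d i.succ j.succ = negOneTridiag (Fin.tail d) i j := by
  simp [negOneTridiag, Fin.tail]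

theorem submatrix_succ_negOneTridiag (d : Fin (n + 1) → R) :
    (negOneTridiag d).submatrix Fin.succ Fin.succ = negOneTridiag (Fin.tail d) :=
  ext (negOneTridiag_succ_succ d)

@[simp]
theorem negOneTridiag_apply_self (d : Fin n → R) (i : Fin n) : negOneTridiag d i i = d i := by
  simp [negOneTridiag]

theorem negOneTridiag_zero_one (d : Fin (n + 2) → R) : negOneTridiag d 0 1 = -1 := by
  simp [negOneTridiag]

theorem negOneTridiag_one_zero (d : Fin (n + 2) → R) : negOneTridiag d 1 0 = -1 := by
  simp [negOneTridiag]

theorem negOneTridiag_succ_succ_zero (d : Fin (n + 2) → R) (i : Fin n) :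
    negOneTridiag d i.succ.succ 0 = 0 := by
  simp [negOneTridiag, Fin.ext_iff]

theorem negOneTridiag_zero_succ_succ (d : Fin (n + 2) → R) (i : Fin n) :
    negOneTridiag d 0 i.succ.succ = 0 := by
  simp [negOneTridiag, Fin.ext_iff]

theorem det_negOneTridiag_submatrix_succAbove_one_succ (d : Fin (n + 2) → R) :
    ((negOneTridiag d).submatrix (Fin.succAbove 1) Fin.succ).det =
      -(negOneTridiag (Fin.tail (Fin.tail d))).det := by
  have hminor : ((negOneTridiag d).submatrix (Fin.succAbove 1) Fin.succ).submatrix Fin.succ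
      (Fin.succAbove 0) = negOneTridiag (Fin.tail (Fin.tail d)) := by
    ext i j
    simp only [submatrix_apply, Fin.one_succAbove_succ, Fin.succAbove_zero, negOneTridiag_succ_succ]
  rw [det_succ_row_zero, Fin.sum_univ_succ, hminor]
  simp [negOneTridiag_zero_succ_succ, negOneTridiag_zero_one]

-- Laplace expansion along the first column; the second minor is expanded along its first row.
theorem det_negOneTridiag_succ_succ (d : Fin (n + 2) → R) :
    (negOneTridiag d).det =
      d 0 * (negOneTridiag (Fin.tail d)).det - (negOneTridiag (Fin.tail (Fin.tail d))).det := by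
  rw [det_succ_column_zero, Fin.sum_univ_succ, Fin.sum_univ_succ]
  simp [negOneTridiag_succ_succ_zero, submatrix_succ_negOneTridiag,
    det_negOneTridiag_submatrix_succAbove_one_succ, negOneTridiag_one_zero, sub_eq_add_neg]

end Matrix

theorem associated_of_mul_add_mul_eq_mul {R : Type*} [CommRing R] [IsDomain R] {a a' b b' : R}
    (ha : IsCoprime a a') (hb : IsCoprime b b') (h : a' * b + a * b' = a * b) :
    Associated a b := by
  refine associated_of_dvd_dvd (ha.dvd_of_dvd_mul_left ⟨b - b', ?_⟩)
    (hb.dvd_of_dvd_mul_left ⟨a - a', ?_⟩) <;> linear_combination h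

open Matrix

theorem disc_eq_det_negOneTridiag (l : List ℤ) : disc l = (negOneTridiag l.get).det := rfl

theorem disc_nil : disc [] = 1 := by
  simp [disc]

theorem disc_singleton (a : ℤ) : disc [a] = a := by
  simp [disc_eq_det_negOneTridiag]

theorem disc_cons_cons (a b : ℤ) (l : List ℤ) :
    disc (a :: b :: l) = a * disc (b :: l) - disc l :=
  det_negOneTridiag_succ_succ (a :: b :: l).get

theorem isCoprime_disc_disc_tail : ∀ l : List ℤ, IsCoprime (disc l) (disc l.tail)
  | [] => by simpa [disc_nil] using isCoprime_one_left
  | [a] => by simpa [disc_singleton, disc_nil] using isCoprime_one_right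
  | a :: b :: l => by
    have h := (isCoprime_disc_disc_tail (b :: l)).symm.neg_left.add_mul_left_left a
    rwa [List.tail_cons, disc_cons_cons, sub_eq_neg_add, mul_comm]

theorem disc_pos_and_lt_disc_cons {a : ℤ} {l : List ℤ} (h : ∀ x ∈ a :: l, 2 ≤ x) :
    0 < disc l ∧ disc l < disc (a :: l) := by
  induction l generalizing a with
  | nil =>
    have ha : 2 ≤ a := h a List.mem_cons_self
    rw [disc_nil, disc_singleton]
    constructor <;> linarith
  | cons b l ih =>
    obtain ⟨hpos, hlt⟩ := ih (a := b) fun x hx => h x (List.mem_cons_of_mem a hx)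
    have ha : 2 ≤ a := h a List.mem_cons_self
    rw [disc_cons_cons]
    constructor <;> nlinarith

theorem disc_pos {l : List ℤ} (h : ∀ x ∈ l, 2 ≤ x) : 0 < disc l := by
  cases l with
  | nil => simp [disc_nil]
  | cons a l =>
    obtain ⟨hpos, hlt⟩ := disc_pos_and_lt_disc_cons h
    exact hpos.trans hlt

theorem disc_eq_of_ind_add_eq_one (A B : List ℤ) (hA : Admissible A) (hB : Admissible B)
    (h : ind A + ind B = 1) : disc A = disc B := by
  have hApos := disc_pos hA.2
  have hBpos := disc_pos hB.2
  have hcleared : disc A.tail * disc B + disc A * disc B.tail = disc A * disc B := by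
    have : (disc A : ℚ) ≠ 0 := by positivity
    have : (disc B : ℚ) ≠ 0 := by positivity
    unfold ind at h
    field_simp at h
    exact_mod_cast h
  exact Int.eq_of_associated_of_nonneg
    (associated_of_mul_add_mul_eq_mul (isCoprime_disc_disc_tail A) (isCoprime_disc_disc_tail B)
      hcleared) hApos.le hBpos.le
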